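/- In the lower-bound construction, let $\sigma_0, \sigma_1: \mathcal{G}_0 \to [M]$ and let $P^{\sigma}$ have conditional means $\Phi^{\sigma}_{\mu,m}(x) = \frac{1}{2}(1 - K_\gamma \epsilon^\gamma \mathbb{I}\{\sigma(y)=m\})$ on each ball $\mathcal{B}(y,\epsilon,\ell_\infty)$, $y \in \mathcal{G}_0$, and $1/2$ elsewhere, with $X$ uniform on the $\epsilon$-net (so each ball has probability proportional to $\epsilon^d$). Then the excess risk of the oracle router of $P^{\sigma_1}$ evaluated under $P^{\sigma_0}$ equals $\mathcal{E}_{P^{\sigma_0}}(\mu, g^\star_{\mu,\sigma_1}) = \frac{K_\gamma \epsilon^{\gamma + d}}{2} \, \delta(\sigma_0, \sigma_1)$, where $\delta(\sigma_0,\sigma_1) = \sum_{y \in \mathcal{G}_0} \mathbb{I}\{\sigma_0(y) \neq \sigma_1(y)\}$ is the Hamming distance. -/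
import Mathlib


/-- Excess risk identity of the lower-bound construction: with `X` uniform over the balls
(each ball indexed by `y ∈ 𝒢` carrying mass `ε^d`) and on-ball risks
`η(y,m) = (1 - K_γ ε^γ 1{σ₀(y)=m})/2` for `y ∈ 𝒢₀` and `1/2` otherwise, the excess risk
of the oracle router of `P^{σ₁}` under `P^{σ₀}` equals
`(K_γ ε^{γ+d}/2) · δ(σ₀,σ₁)` with `δ` the Hamming distance on `𝒢₀`. -/
theorem construction_excess_risk {ι : Type*} [DecidableEq ι] (M : ℕ)
    (𝒢 𝒢0 : Finset ι) (h0 : 𝒢0 ⊆ 𝒢)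
    (σ0 σ1 : ι → Fin M)
    (Kγ ε γ d : ℝ) (hKγ : 0 < Kγ) (hε : 0 < ε) (hγ : 0 < γ) (hd : 0 < d)
    (η : ι → Fin M → ℝ)
    (hη : ∀ y m, η y m =
      if y ∈ 𝒢0 then (1 - Kγ * ε ^ γ * (if σ0 y = m then (1:ℝ) else 0)) / 2 else 1 / 2) :
    (∑ y ∈ 𝒢, ε ^ d * η y (σ1 y)) - (∑ y ∈ 𝒢, ε ^ d * η y (σ0 y))
      = Kγ * ε ^ (γ + d) / 2 * ((𝒢0.filter fun y => σ0 y ≠ σ1 y).card : ℝ) := by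
  rw [← Finset.sum_sub_distrib]
  have key : ∀ y ∈ 𝒢, ε ^ d * η y (σ1 y) - ε ^ d * η y (σ0 y)
      = if y ∈ 𝒢0.filter (fun y => σ0 y ≠ σ1 y) then Kγ * ε ^ (γ + d) / 2 else 0 := by
    intro y _
    rw [hη, hη, Real.rpow_add hε]
    by_cases h1 : y ∈ 𝒢0 <;> simp [h1, Finset.mem_filter]
    · by_cases h2 : σ0 y = σ1 y <;> simp [h2] <;> ring
  rw [Finset.sum_congr rfl key, Finset.sum_ite_mem]
  have : 𝒢 ∩ Finset.filter (fun y => σ0 y ≠ σ1 y) 𝒢0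
      = 𝒢0.filter fun y => σ0 y ≠ σ1 y := by
    apply Finset.inter_eq_right.mpr
    exact (Finset.filter_subset _ _).trans h0
  rw [this, Finset.sum_const, nsmul_eq_mul, mul_comm]
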